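/- Let Q, C* ⊆ V and let Marginal(T,v) = (d(v)−1)/2 + |T| − 2d(v,T) + 1[v∈T] satisfy Marginal(T,v) − Marginal(T',v) ≤ 2|T⊕T'| for all nonempty T,T',v. Define cost via the correlation clustering objective so that removing or adding single vertices changes cost by the corresponding Marginal. Then cost(Q) − cost(C*) ≤ Σ_{v∈Q∖C*} Marginal(C*,v) − Σ_{v∈C*∖Q} Marginal(C*,v) + 2|Q⊕C*|². -/
import Mathlib


open Finset

variable {V : Type*} [Fintype V] [DecidableEq V]

/-- Positive degree of `v` (degrees count a self-loop: `adj` is reflexive). -/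
def posDeg (adj : V → V → Prop) [DecidableRel adj] (v : V) : ℕ :=
  (univ.filter (adj v)).card

/-- `d(v,T)`: positive edges from `v` into `T`. -/
def posDegTo (adj : V → V → Prop) [DecidableRel adj] (v : V) (T : Finset V) : ℕ :=
  (T.filter (adj v)).card

/-- `Marginal(T,v) = (d(v)−1)/2 + |T| − 2·d(v,T) + 1[v∈T]`. -/
noncomputable def marginal (adj : V → V → Prop) [DecidableRel adj]
    (T : Finset V) (v : V) : ℝ :=
  ((posDeg adj v : ℝ) - 1) / 2 + (T.card : ℝ) - 2 * (posDegTo adj v T : ℝ) +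
    (if v ∈ T then 1 else 0)

lemma card_symmDiff' (T T' : Finset V) :
    (symmDiff T T').card = (T \ T').card + (T' \ T).card := by
  rw [symmDiff_def]
  exact Finset.card_union_of_disjoint (disjoint_sdiff_sdiff)

lemma posDegTo_split (adj : V → V → Prop) [DecidableRel adj] (v : V) (T T' : Finset V) :
    posDegTo adj v (T ∩ T') + posDegTo adj v (T \ T') = posDegTo adj v T := by
  unfold posDegTo
  have h1 : (T ∩ T').filter (adj v) = T.filter (adj v) ∩ T'.filter (adj v) := by
    ext u; simp [Finset.mem_filter]; tauto
  have h2 : (T \ T').filter (adj v) = T.filter (adj v) \ T'.filter (adj v) := by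
    ext u; simp [Finset.mem_filter, Finset.mem_sdiff]; tauto
  rw [h1, h2, Finset.card_inter_add_card_sdiff]

lemma marginal_lip (adj : V → V → Prop) [DecidableRel adj] (T T' : Finset V) (v : V) :
    marginal adj T v - marginal adj T' v ≤ 2 * ((symmDiff T T').card : ℝ) := by
  have hc1 : ((T ∩ T').card : ℝ) + ((T \ T').card : ℝ) = (T.card : ℝ) := by
    exact_mod_cast congrArg (Nat.cast (R := ℝ)) (Finset.card_inter_add_card_sdiff T T')
  have hc2 : ((T' ∩ T).card : ℝ) + ((T' \ T).card : ℝ) = (T'.card : ℝ) := by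
    exact_mod_cast congrArg (Nat.cast (R := ℝ)) (Finset.card_inter_add_card_sdiff T' T)
  have hcc : ((T ∩ T').card : ℝ) = ((T' ∩ T).card : ℝ) := by rw [Finset.inter_comm]
  have hd1 : (posDegTo adj v (T ∩ T') : ℝ) + (posDegTo adj v (T \ T') : ℝ)
      = (posDegTo adj v T : ℝ) := by exact_mod_cast congrArg (Nat.cast (R := ℝ)) (posDegTo_split adj v T T')
  have hd2 : (posDegTo adj v (T' ∩ T) : ℝ) + (posDegTo adj v (T' \ T) : ℝ)
      = (posDegTo adj v T' : ℝ) := by exact_mod_cast congrArg (Nat.cast (R := ℝ)) (posDegTo_split adj v T' T)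
  have hdc : (posDegTo adj v (T ∩ T') : ℝ) = (posDegTo adj v (T' ∩ T) : ℝ) := by
    rw [Finset.inter_comm]
  have hdb : (posDegTo adj v (T' \ T) : ℝ) ≤ ((T' \ T).card : ℝ) := by
    exact_mod_cast Finset.card_filter_le _ _
  have hda : (0:ℝ) ≤ (posDegTo adj v (T \ T') : ℝ) := Nat.cast_nonneg _
  have hsd : ((symmDiff T T').card : ℝ) = ((T \ T').card : ℝ) + ((T' \ T).card : ℝ) := by
    exact_mod_cast congrArg (Nat.cast (R := ℝ)) (card_symmDiff' T T')
  unfold marginal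
  rcases Classical.em (v ∈ T) with hvT | hvT <;> rcases Classical.em (v ∈ T') with hvT' | hvT' <;>
    simp only [hvT, hvT', if_pos, if_neg, if_true, if_false]
  · linarith
  · have hva : v ∈ T \ T' := Finset.mem_sdiff.mpr ⟨hvT, hvT'⟩
    have h1 : (1:ℝ) ≤ ((T \ T').card : ℝ) := by
      exact_mod_cast Finset.card_pos.mpr ⟨v, hva⟩
    linarith
  · linarith
  · linarith

/-- If adding/removing a single vertex changes `cost` by the
corresponding `Marginal` (`cost(T∪{v}) − cost(T∖{v}) = Marginal(T,v)`), and
`Marginal(T,v) − Marginal(T',v) ≤ 2|T ⊕ T'|` for all nonempty `T, T'`, then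
`cost(Q) − cost(C*) ≤ Σ_{v∈Q∖C*} Marginal(C*,v) − Σ_{v∈C*∖Q} Marginal(C*,v)
  + 2|Q ⊕ C*|²`. -/
theorem cost_diff_le_marginal_sums (adj : V → V → Prop) [DecidableRel adj]
    (hrefl : ∀ u, adj u u)
    (cost : Finset V → ℝ)
    (hcost : ∀ (T : Finset V) (v : V),
      cost (insert v T) - cost (T.erase v) = marginal adj T v)
    (hlip : ∀ (T T' : Finset V), T.Nonempty → T'.Nonempty → ∀ v : V,
      marginal adj T v - marginal adj T' v ≤ 2 * ((symmDiff T T').card : ℝ))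
    (Q Cstar : Finset V) :
    cost Q - cost Cstar ≤
      (∑ v ∈ Q \ Cstar, marginal adj Cstar v) -
      (∑ v ∈ Cstar \ Q, marginal adj Cstar v) +
      2 * ((symmDiff Q Cstar).card : ℝ) ^ 2 := by
  obtain ⟨n, hn⟩ : ∃ n, (symmDiff Q Cstar).card = n := ⟨_, rfl⟩
  induction n generalizing Q with
  | zero =>
    have h0 : symmDiff Q Cstar = ∅ := Finset.card_eq_zero.mp hn
    have hQC : Q = Cstar := symmDiff_eq_bot.mp h0
    subst hQC
    simp [hn]
  | succ n ih =>
    have hne : (symmDiff Q Cstar).Nonempty := by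
      rw [← Finset.card_pos, hn]; omega
    obtain ⟨v, hv⟩ := hne
    have hvmem := hv
    rw [Finset.mem_symmDiff] at hv
    rcases hv with ⟨hvQ, hvC⟩ | ⟨hvC, hvQ⟩
    · -- v ∈ Q \ Cstar : remove v
      have hsd : symmDiff (Q.erase v) Cstar = (symmDiff Q Cstar).erase v := by
        ext u
        simp only [Finset.mem_symmDiff, Finset.mem_erase]
        by_cases h : u = v
        · subst h; simp [hvQ, hvC]
        · simp [h]
      have hcard : (symmDiff (Q.erase v) Cstar).card = n := by
        rw [hsd, Finset.card_erase_of_mem hvmem, hn]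
        omega
      have hIH := ih (Q.erase v) hcard
      rw [hcard] at hIH
      have hc : cost Q - cost (Q.erase v) = marginal adj (Q.erase v) v := by
        have h := hcost (Q.erase v) v
        rwa [Finset.insert_erase hvQ, Finset.erase_idem] at h
      have hm : marginal adj (Q.erase v) v - marginal adj Cstar v ≤ 2 * (n : ℝ) := by
        have h := marginal_lip adj (Q.erase v) Cstar v
        rwa [hcard] at h
      have hs1 : Q.erase v \ Cstar = (Q \ Cstar).erase v := by
        ext u; simp only [Finset.mem_sdiff, Finset.mem_erase]; tauto
      have hs2 : Cstar \ Q.erase v = Cstar \ Q := by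
        ext u
        simp only [Finset.mem_sdiff, Finset.mem_erase]
        by_cases h : u = v
        · subst h; simp [hvQ, hvC]
        · simp [h]
      have hsum : ∑ u ∈ Q \ Cstar, marginal adj Cstar u
          = marginal adj Cstar v + ∑ u ∈ (Q \ Cstar).erase v, marginal adj Cstar u :=
        (Finset.add_sum_erase _ _ (Finset.mem_sdiff.mpr ⟨hvQ, hvC⟩)).symm
      rw [hs1, hs2] at hIH
      have hn0 : (0:ℝ) ≤ n := Nat.cast_nonneg n
      have key : 2 * (n:ℝ) ^ 2 + 2 * (n:ℝ) ≤ 2 * ((n:ℝ) + 1) ^ 2 := by nlinarith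
      rw [hn]
      push_cast
      linarith [hIH, hm, hc, hsum, key]
    · -- v ∈ Cstar \ Q : insert v
      have hsd : symmDiff (insert v Q) Cstar = (symmDiff Q Cstar).erase v := by
        ext u
        simp only [Finset.mem_symmDiff, Finset.mem_erase, Finset.mem_insert]
        by_cases h : u = v
        · subst h; simp [hvQ, hvC]
        · simp [h]
      have hcard : (symmDiff (insert v Q) Cstar).card = n := by
        rw [hsd, Finset.card_erase_of_mem hvmem, hn]
        omega
      have hIH := ih (insert v Q) hcard
      rw [hcard] at hIH
      have hc : cost (insert v Q) - cost Q = marginal adj Q v := by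
        have h := hcost Q v
        rwa [Finset.erase_eq_of_notMem hvQ] at h
      have hm : marginal adj Cstar v - marginal adj Q v ≤ 2 * ((n:ℝ) + 1) := by
        have h := marginal_lip adj Cstar Q v
        rw [symmDiff_comm, hn] at h
        push_cast at h
        linarith
      have hs1 : insert v Q \ Cstar = Q \ Cstar := by
        ext u
        simp only [Finset.mem_sdiff, Finset.mem_insert]
        by_cases h : u = v
        · subst h; simp [hvC]
        · simp [h]
      have hs2 : Cstar \ insert v Q = (Cstar \ Q).erase v := by
        ext u
        simp only [Finset.mem_sdiff, Finset.mem_insert, Finset.mem_erase]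
        tauto
      have hsum : ∑ u ∈ Cstar \ Q, marginal adj Cstar u
          = marginal adj Cstar v + ∑ u ∈ (Cstar \ Q).erase v, marginal adj Cstar u :=
        (Finset.add_sum_erase _ _ (Finset.mem_sdiff.mpr ⟨hvC, hvQ⟩)).symm
      rw [hs1, hs2] at hIH
      have hn0 : (0:ℝ) ≤ n := Nat.cast_nonneg n
      have key : 2 * (n:ℝ) ^ 2 + 2 * ((n:ℝ) + 1) ≤ 2 * ((n:ℝ) + 1) ^ 2 := by nlinarith
      rw [hn]
      push_cast
      linarith [hIH, hm, hc, hsum, key]
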